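/- arXiv:0707.2306 — 2 statements merged into one kernel-verified Lean document; each statement's English description precedes it below -/
import Mathlib

section
/- Let E be a finite set and C an 𝔽₂-linear subspace of 𝔽₂^E. For every complex number t, the sum over all cosets D of C in 𝔽₂^E of hwe(D;t)² equals ∑_{x ∈ C} (2t)^{|x|} (t² + 1)^{|E| − |x|}. -/
open Finset

/-- Hamming weight of a vector over `ZMod 2`: the number of nonzero coordinates. -/
noncomputable def hammingWt {E : Type*} (x : E → ZMod 2) : ℕ :=
  Nat.card {e : E // x e ≠ 0}

lemma wt_card {E : Type*} [Fintype E] [DecidableEq E] (x : E → ZMod 2) :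
    hammingWt x = (univ.filter (fun e => x e ≠ 0)).card := by
  simp [hammingWt, Nat.card_eq_fintype_card, Fintype.card_subtype]

lemma zero_card {E : Type*} [Fintype E] [DecidableEq E] (x : E → ZMod 2) :
    (univ.filter (fun e => x e = 0)).card = Fintype.card E - hammingWt x := by
  rw [wt_card]
  have h := Finset.card_filter_add_card_filter_not (s := (univ : Finset E))
    (p := fun e => x e = 0)
  simp only [Finset.card_univ] at h
  have h2 : (univ.filter (fun e => ¬ x e = 0)).card ≤ Fintype.card E := by
    simpa using Finset.card_filter_le (univ : Finset E) (fun e => ¬ x e = 0)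
  have h3 : (univ.filter (fun e => x e ≠ 0)) = (univ.filter (fun e => ¬ x e = 0)) := rfl
  rw [h3]
  omega

lemma pow_eq_prod {E : Type*} [Fintype E] [DecidableEq E] (x : E → ZMod 2) (t : ℂ) :
    t ^ (Fintype.card E - hammingWt x) = ∏ e, if x e = 0 then t else 1 := by
  rw [Finset.prod_ite, Finset.prod_const, Finset.prod_const, one_pow, mul_one, zero_card]

lemma zmod2_cases : ∀ a : ZMod 2, a = 0 ∨ a = 1 := by decide

lemma sum_zmod2 (f : ZMod 2 → ℂ) : ∑ a : ZMod 2, f a = f 0 + f 1 := by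
  have : (univ : Finset (ZMod 2)) = {0, 1} := by decide
  rw [this, Finset.sum_insert (by decide), Finset.sum_singleton]

lemma per_c {E : Type*} [Fintype E] [DecidableEq E] (c : E → ZMod 2) (t : ℂ) :
    ∑ x : E → ZMod 2,
      t ^ (Fintype.card E - hammingWt x) * t ^ (Fintype.card E - hammingWt (x + c)) =
    (2 * t) ^ hammingWt c * (t ^ 2 + 1) ^ (Fintype.card E - hammingWt c) := by
  have key : ∀ x : E → ZMod 2,
      t ^ (Fintype.card E - hammingWt x) * t ^ (Fintype.card E - hammingWt (x + c)) =
      ∏ e, ((if x e = 0 then t else 1) * (if x e + c e = 0 then t else 1)) := by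
    intro x
    rw [pow_eq_prod, pow_eq_prod, ← Finset.prod_mul_distrib]
    rfl
  simp only [key]
  rw [← Fintype.prod_sum (fun e (a : ZMod 2) =>
      (if a = 0 then t else 1) * (if a + c e = 0 then t else 1))]
  have factor : ∀ e : E,
      (∑ a : ZMod 2, (if a = 0 then t else 1) * (if a + c e = 0 then t else 1)) =
      if c e = 0 then t ^ 2 + 1 else 2 * t := by
    intro e
    rw [sum_zmod2]
    have h2 : (1 + 1 : ZMod 2) = 0 := by decide
    have h3 : (1 : ZMod 2) ≠ 0 := by decide
    rcases zmod2_cases (c e) with h | h <;> simp [h, h2, h3] <;> ring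
  rw [Finset.prod_congr rfl (fun e _ => factor e), Finset.prod_ite,
    Finset.prod_const, Finset.prod_const, zero_card, mul_comm]
  congr 1
  rw [wt_card]

/-- The sum over all cosets `D` of `C` in `𝔽₂^E` of `hwe(D;t)²` equals
`∑_{x ∈ C} (2t)^{|x|} (t² + 1)^{|E| − |x|}`. -/
theorem stmt_1 {E : Type*} [Fintype E] [DecidableEq E]
    (C : Submodule (ZMod 2) (E → ZMod 2))
    [Fintype ((E → ZMod 2) ⧸ C)] [DecidableEq ((E → ZMod 2) ⧸ C)]
    [DecidablePred (· ∈ C)] (t : ℂ) :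
    ∑ D : (E → ZMod 2) ⧸ C,
      (∑ x ∈ univ.filter (fun x : E → ZMod 2 =>
            (Submodule.Quotient.mk x : (E → ZMod 2) ⧸ C) = D),
          t ^ (Fintype.card E - hammingWt x)) ^ 2 =
      ∑ x ∈ univ.filter (fun x : E → ZMod 2 => x ∈ C),
        (2 * t) ^ hammingWt x * (t ^ 2 + 1) ^ (Fintype.card E - hammingWt x) := by
  set f : (E → ZMod 2) → ℂ := fun x => t ^ (Fintype.card E - hammingWt x) with hf
  set mk : (E → ZMod 2) → (E → ZMod 2) ⧸ C := fun x => Submodule.Quotient.mk x with hmk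
  calc
    ∑ D : (E → ZMod 2) ⧸ C, (∑ x ∈ univ.filter (fun x => mk x = D), f x) ^ 2
      = ∑ D : (E → ZMod 2) ⧸ C, ∑ x ∈ univ.filter (fun x => mk x = D),
          (f x * ∑ y ∈ univ.filter (fun y => mk y = mk x), f y) := by
        refine Finset.sum_congr rfl fun D _ => ?_
        rw [sq, Finset.sum_mul]
        refine Finset.sum_congr rfl fun x hx => ?_
        have : mk x = D := (Finset.mem_filter.1 hx).2
        rw [this]
    _ = ∑ x : E → ZMod 2, f x * ∑ y ∈ univ.filter (fun y => mk y = mk x), f y :=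
        Finset.sum_fiberwise univ mk _
    _ = ∑ x : E → ZMod 2, ∑ c ∈ univ.filter (fun c => c ∈ C), f x * f (x + c) := by
        refine Finset.sum_congr rfl fun x _ => ?_
        rw [Finset.mul_sum]
        refine Finset.sum_nbij' (fun y => y - x) (fun c => x + c) ?_ ?_ ?_ ?_ ?_
        · intro y hy
          simp only [Finset.mem_filter, Finset.mem_univ, true_and] at hy ⊢
          exact (Submodule.Quotient.eq C).1 hy
        · intro c hc
          simp only [Finset.mem_filter, Finset.mem_univ, true_and] at hc ⊢
          exact (Submodule.Quotient.eq C).2 (by simpa [add_sub_cancel_left] using hc)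
        · intro y _; ext e; simp only [Pi.sub_apply, Pi.add_apply]; ring
        · intro c _; ext e; simp only [Pi.sub_apply, Pi.add_apply]; ring
        · intro y _
          rw [show x + (y - x) = y from by ext e; simp only [Pi.sub_apply, Pi.add_apply]; ring]
    _ = ∑ c ∈ univ.filter (fun c => c ∈ C), ∑ x : E → ZMod 2, f x * f (x + c) :=
        Finset.sum_comm
    _ = ∑ c ∈ univ.filter (fun c => c ∈ C),
          (2 * t) ^ hammingWt c * (t ^ 2 + 1) ^ (Fintype.card E - hammingWt c) :=
        Finset.sum_congr rfl fun c _ => per_c c t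
end

section
/- Let G be a finite simple graph with edge set E. Then 2^{|E|} · (N₁ − N₂) = (M₁ − M₂) · ∑_{(a,b)} (−1)^{|E| − |a ∪ b|}, where N₁ (respectively N₂) is the number of ordered triples (A,B,C) of subsets of E with A△B and B△C both eulerian and |A| + |B| + |C| ≡ 0 or 1 (mod 4) (respectively ≡ 2 or 3 (mod 4)), M₁ (respectively M₂) is the number of arbitrary ordered triples (A,B,C) of subsets of E with |A| + |B| + |C| ≡ 0 or 1 (mod 4) (respectively ≡ 2 or 3 (mod 4)), and the last sum is over ordered pairs (a,b) of eulerian subsets of E. Moreover, if |E| ≡ 1 (mod 4) then N₁ = N₂ and M₁ = M₂. -/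
/-- A finite set `A` of potential edges (unordered pairs) is eulerian if every vertex is
incident with an even number of its elements. -/
def IsEul {V : Type*} (A : Finset (Sym2 V)) : Prop :=
  ∀ v : V, Even (Nat.card {e : Sym2 V // e ∈ A ∧ v ∈ e})

/- `2^{|E|} (N₁ − N₂) = (M₁ − M₂) ∑_{(a,b) eulerian} (−1)^{|E| − |a ∪ b|}` where `N₁, N₂`
count triples of subsets of `E` with `A △ B`, `B △ C` eulerian and `|A|+|B|+|C|`
congruent to `0,1` resp. `2,3` mod `4`, and `M₁, M₂` count arbitrary triples of subsets
of `E` with the same congruence conditions.  Moreover if `|E| ≡ 1 (mod 4)` then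
`N₁ = N₂` and `M₁ = M₂`. -/
open Finset


local notation "GI" => GaussianInt
local notation "gi" => (Zsqrtd.sqrtd : GaussianInt)

/-- re + im as additive hom -/
def fgi : GaussianInt →+ ℤ where
  toFun z := z.re + z.im
  map_zero' := rfl
  map_add' z w := by simp [Zsqrtd.re_add, Zsqrtd.im_add]; ring

lemma fgi_int_mul (z : GI) (k : ℤ) : fgi (z * (k : GI)) = fgi z * k := by
  show (z * (k : GI)).re + (z * (k : GI)).im = (z.re + z.im) * k
  simp [fgi, Zsqrtd.re_mul, Zsqrtd.im_mul, Zsqrtd.re_intCast, Zsqrtd.im_intCast]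
  ring

lemma gi_pow_four (k : ℕ) : gi ^ k = gi ^ (k % 4) := by
  conv_lhs => rw [← Nat.div_add_mod k 4]
  rw [pow_add, pow_mul]
  have h4 : gi ^ 4 = 1 := by decide
  rw [h4, one_pow, one_mul]

lemma fgi_pow (k : ℕ) :
    fgi (gi ^ k) = if k % 4 = 0 ∨ k % 4 = 1 then 1 else -1 := by
  rw [gi_pow_four]
  have h : k % 4 = 0 ∨ k % 4 = 1 ∨ k % 4 = 2 ∨ k % 4 = 3 := by omega
  rcases h with h | h | h | h <;> rw [h] <;> simp <;> decide

lemma count_sub_eq_sum {α : Type*} (s : Finset α) (w : α → ℕ) :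
    ((s.filter fun p => w p % 4 = 0 ∨ w p % 4 = 1).card : ℤ) -
      ((s.filter fun p => w p % 4 = 2 ∨ w p % 4 = 3).card : ℤ) =
    ∑ p ∈ s, fgi (gi ^ w p) := by
  classical
  rw [← Finset.sum_filter_add_sum_filter_not s (fun p => w p % 4 = 0 ∨ w p % 4 = 1)]
  have h1 : ∀ p ∈ s.filter (fun p => w p % 4 = 0 ∨ w p % 4 = 1), fgi (gi ^ w p) = 1 := by
    intro p hp
    rw [fgi_pow, if_pos (Finset.mem_filter.mp hp).2]
  have h2 : ∀ p ∈ s.filter (fun p => ¬(w p % 4 = 0 ∨ w p % 4 = 1)), fgi (gi ^ w p) = -1 := by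
    intro p hp
    rw [fgi_pow, if_neg (Finset.mem_filter.mp hp).2]
  rw [Finset.sum_congr rfl h1, Finset.sum_congr rfl h2]
  have : (s.filter fun p => ¬(w p % 4 = 0 ∨ w p % 4 = 1)) =
      (s.filter fun p => w p % 4 = 2 ∨ w p % 4 = 3) := by
    apply Finset.filter_congr
    intro p _
    omega
  rw [this, Finset.sum_const, Finset.sum_const]
  simp
  ring


-- card of symmDiff identity
lemma card_symmDiff_aux {α : Type*} [DecidableEq α] (a b : Finset α) :
    (symmDiff a b).card + 2 * (a ∩ b).card = a.card + b.card := by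
  have h : symmDiff a b = (a \ b) ∪ (b \ a) := symmDiff_def a b
  have hd : Disjoint (a \ b) (b \ a) := disjoint_sdiff_sdiff
  have h1 : (a \ b).card + (a ∩ b).card = a.card := by
    rw [Finset.card_sdiff_add_card_inter]
  have h2 : (b \ a).card + (b ∩ a).card = b.card := by
    rw [Finset.card_sdiff_add_card_inter]
  have h3 : (a ∩ b).card = (b ∩ a).card := by rw [Finset.inter_comm]
  rw [h, Finset.card_union_of_disjoint hd]
  omega

-- symmDiff subset of union
lemma symmDiff_subset_union {α : Type*} [DecidableEq α] (a b : Finset α) :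
    symmDiff a b ⊆ a ∪ b := by
  intro e he
  rw [Finset.mem_symmDiff] at he
  rw [Finset.mem_union]
  tauto

-- powerset sum as product
lemma sum_powerset_prod {α R : Type*} [DecidableEq α] [CommRing R] (E : Finset α) (v : α → R) :
    ∑ B ∈ E.powerset, ∏ e ∈ B, v e = ∏ e ∈ E, (1 + v e) := by
  have : ∀ e ∈ E, (1 : R) + v e = v e + 1 := fun e _ => add_comm _ _
  rw [Finset.prod_congr rfl this, Finset.prod_add]
  apply Finset.sum_congr rfl
  intro t _
  simp

-- inter distributes over symmDiff
lemma inter_symmDiff_aux {α : Type*} [DecidableEq α] (a c B : Finset α) :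
    (symmDiff a c) ∩ B = symmDiff (a ∩ B) (c ∩ B) := by
  ext e
  simp [Finset.mem_symmDiff, Finset.mem_inter]
  tauto

-- per-term rewrite
lemma term_rewrite {α : Type*} [DecidableEq α] (a c B : Finset α) :
    gi ^ ((symmDiff a B).card + B.card + (symmDiff B c).card) =
      gi ^ (a.card + c.card) * ∏ e ∈ B, ((-gi) * (if e ∈ symmDiff a c then -1 else 1)) := by
  have key : ∀ k : ℕ, gi ^ (2 * k) = (-1) ^ k := by
    intro k
    rw [pow_mul]
    have h2 : gi ^ 2 = -1 := by decide
    rw [h2]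
  -- exponent bookkeeping
  have h1 := card_symmDiff_aux a B
  have h2 := card_symmDiff_aux B c
  have hmain : gi ^ ((symmDiff a B).card + B.card + (symmDiff B c).card)
      * gi ^ (2 * ((a ∩ B).card + (B ∩ c).card))
      = gi ^ (a.card + c.card) * gi ^ (3 * B.card) := by
    rw [← pow_add, ← pow_add]
    congr 1
    omega
  have hunit : gi ^ (2 * ((a ∩ B).card + (B ∩ c).card)) = (-1) ^ ((a ∩ B).card + (B ∩ c).card) :=
    key _
  -- product evaluation
  have hprod : ∏ e ∈ B, ((-gi) * (if e ∈ symmDiff a c then -1 else 1))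
      = (-gi) ^ B.card * (-1 : GI) ^ ((symmDiff a c ∩ B).card) := by
    rw [Finset.prod_mul_distrib, Finset.prod_const]
    congr 1
    rw [Finset.prod_ite, Finset.prod_const, Finset.prod_const, one_pow, mul_one,
      Finset.filter_mem_eq_inter, Finset.inter_comm]
  have hgi3 : gi ^ (3 * B.card) = (-gi) ^ B.card := by
    have h3 : gi ^ 3 = -gi := by decide
    rw [pow_mul, h3]
  -- parity: (a∩B).card + (B∩c).card ≡ (a△c ∩ B).card mod 2
  have hpar : (-1 : GI) ^ ((a ∩ B).card + (B ∩ c).card) = (-1) ^ ((symmDiff a c ∩ B).card) := by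
    have hd := card_symmDiff_aux (a ∩ B) (c ∩ B)
    have hic : (a ∩ B) ∩ (c ∩ B) = a ∩ c ∩ B := by
      ext e
      simp [Finset.mem_inter]
    have hbc : (B ∩ c).card = (c ∩ B).card := by rw [Finset.inter_comm]
    rw [inter_symmDiff_aux]
    have : (a ∩ B).card + (B ∩ c).card =
        (symmDiff (a ∩ B) (c ∩ B)).card + 2 * ((a ∩ c ∩ B)).card := by
      rw [hbc]; rw [hic] at hd; omega
    rw [this, pow_add, pow_mul, neg_one_sq, one_pow, mul_one]
  -- combine
  have hneg : ((-1 : GI) ^ ((a ∩ B).card + (B ∩ c).card)) *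
      ((-1 : GI) ^ ((a ∩ B).card + (B ∩ c).card)) = 1 := by
    rw [← pow_add, ← two_mul, pow_mul, neg_one_sq, one_pow]
  calc gi ^ ((symmDiff a B).card + B.card + (symmDiff B c).card)
      = gi ^ ((symmDiff a B).card + B.card + (symmDiff B c).card)
        * (((-1 : GI) ^ ((a ∩ B).card + (B ∩ c).card)) *
           ((-1 : GI) ^ ((a ∩ B).card + (B ∩ c).card))) := by rw [hneg, mul_one]
    _ = (gi ^ ((symmDiff a B).card + B.card + (symmDiff B c).card)
          * gi ^ (2 * ((a ∩ B).card + (B ∩ c).card)))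
        * ((-1 : GI) ^ ((a ∩ B).card + (B ∩ c).card)) := by rw [hunit]; ring
    _ = gi ^ (a.card + c.card) * gi ^ (3 * B.card)
        * ((-1 : GI) ^ ((a ∩ B).card + (B ∩ c).card)) := by rw [hmain]
    _ = gi ^ (a.card + c.card) * ((-gi) ^ B.card * (-1 : GI) ^ ((symmDiff a c ∩ B).card)) := by
        rw [hgi3, hpar]; ring
    _ = _ := by rw [hprod]

lemma innerB_sum {α : Type*} [DecidableEq α] (E a c : Finset α) (ha : a ⊆ E) (hc : c ⊆ E) :
    ∑ B ∈ E.powerset, gi ^ ((symmDiff a B).card + B.card + (symmDiff B c).card)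
      = (-1) ^ ((a ∪ c).card) * (1 - gi) ^ E.card := by
  have hsub : symmDiff a c ⊆ E := (symmDiff_subset_union a c).trans (Finset.union_subset ha hc)
  set d := (symmDiff a c).card with hd
  have hdm : d ≤ E.card := Finset.card_le_card hsub
  have step1 : ∑ B ∈ E.powerset, gi ^ ((symmDiff a B).card + B.card + (symmDiff B c).card)
      = gi ^ (a.card + c.card) *
        ∑ B ∈ E.powerset, ∏ e ∈ B, ((-gi) * (if e ∈ symmDiff a c then -1 else 1)) := by
    rw [Finset.mul_sum]
    exact Finset.sum_congr rfl fun B _ => term_rewrite a c B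
  rw [step1, sum_powerset_prod]
  have step2 : ∏ e ∈ E, (1 + (-gi) * (if e ∈ symmDiff a c then -1 else 1))
      = (1 + gi) ^ d * (1 - gi) ^ (E.card - d) := by
    have hcong : ∀ e ∈ E, (1 + (-gi) * (if e ∈ symmDiff a c then -1 else 1))
        = (if e ∈ symmDiff a c then 1 + gi else 1 - gi) := by
      intro e _
      by_cases h : e ∈ symmDiff a c <;> simp [h] <;> ring
    rw [Finset.prod_congr rfl hcong, Finset.prod_ite, Finset.prod_const, Finset.prod_const,
      Finset.filter_mem_eq_inter, Finset.inter_eq_right.mpr hsub]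
    congr 1
    congr 1
    have h2 := Finset.card_filter_add_card_filter_not (s := E) (fun e => e ∈ symmDiff a c)
    have h3 : (E.filter (fun e => e ∈ symmDiff a c)).card = d := by
      rw [Finset.filter_mem_eq_inter, Finset.inter_eq_right.mpr hsub]
    omega
  rw [step2]
  -- final algebra
  have hcards := card_symmDiff_aux a c
  have hunion := Finset.card_union_add_card_inter a c
  have hac : a.card + c.card = d + 2 * (a ∩ c).card := by omega
  have huc : (a ∪ c).card = d + (a ∩ c).card := by omega
  rw [hac, huc, pow_add, pow_add, pow_mul]
  have hsq : gi ^ 2 = -1 := by decide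
  rw [hsq]
  have hkey : gi ^ d * (1 + gi) ^ d = (-1 : GI) ^ d * (1 - gi) ^ d := by
    rw [← mul_pow, ← mul_pow]
    have hb : gi * (1 + gi) = (-1) * (1 - gi) := by decide
    rw [hb]
  have hpowm : (1 - gi) ^ d * (1 - gi) ^ (E.card - d) = (1 - gi) ^ E.card := by
    rw [← pow_add]
    congr 1
    omega
  calc gi ^ d * (-1 : GI) ^ ((a ∩ c).card) * ((1 + gi) ^ d * (1 - gi) ^ (E.card - d))
      = (gi ^ d * (1 + gi) ^ d) * ((-1 : GI) ^ ((a ∩ c).card) * (1 - gi) ^ (E.card - d)) := by ring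
    _ = ((-1 : GI) ^ d * (1 - gi) ^ d) * ((-1 : GI) ^ ((a ∩ c).card) * (1 - gi) ^ (E.card - d)) := by
        rw [hkey]
    _ = ((-1 : GI) ^ d * (-1 : GI) ^ ((a ∩ c).card)) * ((1 - gi) ^ d * (1 - gi) ^ (E.card - d)) := by
        ring
    _ = (-1 : GI) ^ d * (-1 : GI) ^ ((a ∩ c).card) * (1 - gi) ^ E.card := by rw [hpowm]

lemma sumA_eq {α : Type*} [DecidableEq α] (E : Finset α) :
    ∑ A ∈ E.powerset, gi ^ A.card = (1 + gi) ^ E.card := by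
  have h : ∀ A ∈ E.powerset, gi ^ A.card = ∏ _e ∈ A, gi := by
    intro A _
    rw [Finset.prod_const]
  rw [Finset.sum_congr rfl h, sum_powerset_prod, Finset.prod_const]

lemma triple_sum_eq {α : Type*} [DecidableEq α] (E : Finset α)
    (P : Finset α → Prop) [DecidablePred P] :
    ∑ p ∈ (E.powerset ×ˢ (E.powerset ×ˢ E.powerset)).filter
        (fun p => P (symmDiff p.1 p.2.1) ∧ P (symmDiff p.2.1 p.2.2)),
      gi ^ (p.1.card + p.2.1.card + p.2.2.card)
    = (∑ a ∈ E.powerset.filter P, ∑ c ∈ E.powerset.filter P, (-1 : GI) ^ ((a ∪ c).card))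
        * (1 - gi) ^ E.card := by
  classical
  have hmem : ∀ {x y : Finset α}, x ⊆ E → y ⊆ E → symmDiff x y ⊆ E := by
    intro x y hx hy
    exact (symmDiff_subset_union x y).trans (Finset.union_subset hx hy)
  have step1 : ∑ p ∈ (E.powerset ×ˢ (E.powerset ×ˢ E.powerset)).filter
        (fun p => P (symmDiff p.1 p.2.1) ∧ P (symmDiff p.2.1 p.2.2)),
      gi ^ (p.1.card + p.2.1.card + p.2.2.card)
      = ∑ q ∈ (E.powerset.filter P) ×ˢ (E.powerset ×ˢ (E.powerset.filter P)),
          gi ^ ((symmDiff q.1 q.2.1).card + q.2.1.card + (symmDiff q.2.1 q.2.2).card) := by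
    apply Finset.sum_nbij' (i := fun p => (symmDiff p.1 p.2.1, p.2.1, symmDiff p.2.1 p.2.2))
      (j := fun q => (symmDiff q.1 q.2.1, q.2.1, symmDiff q.2.1 q.2.2))
    · intro p hp
      simp only [Finset.mem_filter, Finset.mem_product, Finset.mem_powerset] at hp ⊢
      obtain ⟨⟨h1, h2, h3⟩, h4, h5⟩ := hp
      exact ⟨⟨hmem h1 h2, h4⟩, h2, hmem h2 h3, h5⟩
    · intro q hq
      simp only [Finset.mem_filter, Finset.mem_product, Finset.mem_powerset] at hq ⊢
      obtain ⟨⟨h1, h4⟩, h2, h3, h5⟩ := hq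
      refine ⟨⟨hmem h1 h2, h2, hmem h2 h3⟩, ?_, ?_⟩
      · rwa [symmDiff_symmDiff_cancel_right]
      · rwa [symmDiff_symmDiff_cancel_left]
    · intro p _
      simp only [symmDiff_symmDiff_cancel_right, symmDiff_symmDiff_cancel_left]
    · intro q _
      simp only [symmDiff_symmDiff_cancel_right, symmDiff_symmDiff_cancel_left]
    · intro p _
      simp only [symmDiff_symmDiff_cancel_right, symmDiff_symmDiff_cancel_left]
  rw [step1, Finset.sum_product]
  have step2 : ∀ a ∈ E.powerset.filter P,
      (∑ q ∈ E.powerset ×ˢ (E.powerset.filter P),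
        gi ^ ((symmDiff a q.1).card + q.1.card + (symmDiff q.1 q.2).card))
      = ∑ c ∈ E.powerset.filter P, (-1 : GI) ^ ((a ∪ c).card) * (1 - gi) ^ E.card := by
    intro a ha
    rw [Finset.sum_product]
    rw [Finset.sum_comm]
    apply Finset.sum_congr rfl
    intro c hc
    have ha' : a ⊆ E := Finset.mem_powerset.mp (Finset.mem_filter.mp ha).1
    have hc' : c ⊆ E := Finset.mem_powerset.mp (Finset.mem_filter.mp hc).1
    exact innerB_sum E a c ha' hc'
  rw [Finset.sum_congr rfl step2, Finset.sum_mul]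
  apply Finset.sum_congr rfl
  intro a _
  rw [Finset.sum_mul]

lemma M_sum_eq {α : Type*} [DecidableEq α] (E : Finset α) :
    ∑ p ∈ E.powerset ×ˢ (E.powerset ×ˢ E.powerset),
      gi ^ (p.1.card + p.2.1.card + p.2.2.card)
    = (1 + gi) ^ (3 * E.card) := by
  have h3 : (3 : ℕ) * E.card = E.card + (E.card + E.card) := by ring
  rw [h3, pow_add, pow_add]
  simp only [← sumA_eq E]
  rw [Finset.sum_mul_sum, Finset.sum_mul_sum, Finset.sum_product]
  apply Finset.sum_congr rfl
  intro A _
  rw [Finset.sum_product]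
  apply Finset.sum_congr rfl
  intro B _
  rw [Finset.mul_sum]
  apply Finset.sum_congr rfl
  intro C _
  rw [pow_add, pow_add]
  ring

lemma one_add_gi_cube_pow (m : ℕ) :
    ((1 + gi) : GI) ^ (3 * m) = ((-2 : ℤ) : GI) ^ m * (1 - gi) ^ m := by
  have hb : ((1 + gi) : GI) ^ 3 = ((-2 : ℤ) : GI) * (1 - gi) := by decide
  rw [pow_mul, hb, mul_pow]

lemma neg_one_pow_sub {m k : ℕ} (h : k ≤ m) : (-1 : ℤ) ^ (m - k) = (-1) ^ m * (-1) ^ k := by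
  conv_rhs => rw [← Nat.sub_add_cancel h]
  rw [pow_add, mul_assoc, ← pow_add, ← two_mul, pow_mul]
  norm_num

lemma sdiff_symmDiff_aux {α : Type*} [DecidableEq α] {E A B : Finset α}
    (hA : A ⊆ E) (hB : B ⊆ E) : symmDiff (E \ A) (E \ B) = symmDiff A B := by
  ext e
  have hA' := @hA e
  have hB' := @hB e
  simp only [Finset.mem_symmDiff, Finset.mem_sdiff]
  tauto

lemma comp_card_eq {α : Type*} [Fintype α] [DecidableEq α] (E : Finset α)
    (Q Q' : (Finset α × Finset α × Finset α) → Prop)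
    (hQ : ∀ p : Finset α × Finset α × Finset α, p.1 ⊆ E → p.2.1 ⊆ E → p.2.2 ⊆ E →
      Q p → Q' (E \ p.1, E \ p.2.1, E \ p.2.2))
    (hQ' : ∀ p : Finset α × Finset α × Finset α, p.1 ⊆ E → p.2.1 ⊆ E → p.2.2 ⊆ E →
      Q' p → Q (E \ p.1, E \ p.2.1, E \ p.2.2)) :
    Nat.card {p : Finset α × Finset α × Finset α //
        p.1 ⊆ E ∧ p.2.1 ⊆ E ∧ p.2.2 ⊆ E ∧ Q p} =
    Nat.card {p : Finset α × Finset α × Finset α //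
        p.1 ⊆ E ∧ p.2.1 ⊆ E ∧ p.2.2 ⊆ E ∧ Q' p} := by
  apply Nat.card_congr
  refine ⟨fun x => ⟨(E \ x.1.1, E \ x.1.2.1, E \ x.1.2.2), ?_⟩,
          fun x => ⟨(E \ x.1.1, E \ x.1.2.1, E \ x.1.2.2), ?_⟩, ?_, ?_⟩
  · obtain ⟨p, h1, h2, h3, h4⟩ := x
    exact ⟨Finset.sdiff_subset, Finset.sdiff_subset, Finset.sdiff_subset, hQ p h1 h2 h3 h4⟩
  · obtain ⟨p, h1, h2, h3, h4⟩ := x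
    exact ⟨Finset.sdiff_subset, Finset.sdiff_subset, Finset.sdiff_subset, hQ' p h1 h2 h3 h4⟩
  · rintro ⟨⟨A, B, C⟩, h1, h2, h3, h4⟩
    ext : 2 <;> simp_all [Finset.sdiff_sdiff_eq_self]
  · rintro ⟨⟨A, B, C⟩, h1, h2, h3, h4⟩
    ext : 2 <;> simp_all [Finset.sdiff_sdiff_eq_self]

set_option maxHeartbeats 2000000 in
open Classical in
theorem stmt_12 {V : Type*} [Fintype V] [DecidableEq V] (G : SimpleGraph V)
    [DecidableRel G.Adj] :
    (2 ^ G.edgeFinset.card *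
      ((Nat.card {p : Finset (Sym2 V) × Finset (Sym2 V) × Finset (Sym2 V) //
          p.1 ⊆ G.edgeFinset ∧ p.2.1 ⊆ G.edgeFinset ∧ p.2.2 ⊆ G.edgeFinset ∧
            IsEul (symmDiff p.1 p.2.1) ∧ IsEul (symmDiff p.2.1 p.2.2) ∧
            ((p.1.card + p.2.1.card + p.2.2.card) % 4 = 0 ∨
              (p.1.card + p.2.1.card + p.2.2.card) % 4 = 1)} : ℤ) -
        (Nat.card {p : Finset (Sym2 V) × Finset (Sym2 V) × Finset (Sym2 V) //
          p.1 ⊆ G.edgeFinset ∧ p.2.1 ⊆ G.edgeFinset ∧ p.2.2 ⊆ G.edgeFinset ∧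
            IsEul (symmDiff p.1 p.2.1) ∧ IsEul (symmDiff p.2.1 p.2.2) ∧
            ((p.1.card + p.2.1.card + p.2.2.card) % 4 = 2 ∨
              (p.1.card + p.2.1.card + p.2.2.card) % 4 = 3)} : ℤ)) =
      ((Nat.card {p : Finset (Sym2 V) × Finset (Sym2 V) × Finset (Sym2 V) //
          p.1 ⊆ G.edgeFinset ∧ p.2.1 ⊆ G.edgeFinset ∧ p.2.2 ⊆ G.edgeFinset ∧
            ((p.1.card + p.2.1.card + p.2.2.card) % 4 = 0 ∨
              (p.1.card + p.2.1.card + p.2.2.card) % 4 = 1)} : ℤ) -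
        (Nat.card {p : Finset (Sym2 V) × Finset (Sym2 V) × Finset (Sym2 V) //
          p.1 ⊆ G.edgeFinset ∧ p.2.1 ⊆ G.edgeFinset ∧ p.2.2 ⊆ G.edgeFinset ∧
            ((p.1.card + p.2.1.card + p.2.2.card) % 4 = 2 ∨
              (p.1.card + p.2.1.card + p.2.2.card) % 4 = 3)} : ℤ)) *
        ∑ a ∈ G.edgeFinset.powerset.filter (fun a => IsEul a),
          ∑ b ∈ G.edgeFinset.powerset.filter (fun b => IsEul b),
            (-1 : ℤ) ^ (G.edgeFinset.card - (a ∪ b).card)) ∧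
    (G.edgeFinset.card % 4 = 1 →
      (Nat.card {p : Finset (Sym2 V) × Finset (Sym2 V) × Finset (Sym2 V) //
          p.1 ⊆ G.edgeFinset ∧ p.2.1 ⊆ G.edgeFinset ∧ p.2.2 ⊆ G.edgeFinset ∧
            IsEul (symmDiff p.1 p.2.1) ∧ IsEul (symmDiff p.2.1 p.2.2) ∧
            ((p.1.card + p.2.1.card + p.2.2.card) % 4 = 0 ∨
              (p.1.card + p.2.1.card + p.2.2.card) % 4 = 1)} =
        Nat.card {p : Finset (Sym2 V) × Finset (Sym2 V) × Finset (Sym2 V) //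
          p.1 ⊆ G.edgeFinset ∧ p.2.1 ⊆ G.edgeFinset ∧ p.2.2 ⊆ G.edgeFinset ∧
            IsEul (symmDiff p.1 p.2.1) ∧ IsEul (symmDiff p.2.1 p.2.2) ∧
            ((p.1.card + p.2.1.card + p.2.2.card) % 4 = 2 ∨
              (p.1.card + p.2.1.card + p.2.2.card) % 4 = 3)}) ∧
      Nat.card {p : Finset (Sym2 V) × Finset (Sym2 V) × Finset (Sym2 V) //
          p.1 ⊆ G.edgeFinset ∧ p.2.1 ⊆ G.edgeFinset ∧ p.2.2 ⊆ G.edgeFinset ∧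
            ((p.1.card + p.2.1.card + p.2.2.card) % 4 = 0 ∨
              (p.1.card + p.2.1.card + p.2.2.card) % 4 = 1)} =
        Nat.card {p : Finset (Sym2 V) × Finset (Sym2 V) × Finset (Sym2 V) //
          p.1 ⊆ G.edgeFinset ∧ p.2.1 ⊆ G.edgeFinset ∧ p.2.2 ⊆ G.edgeFinset ∧
            ((p.1.card + p.2.1.card + p.2.2.card) % 4 = 2 ∨
              (p.1.card + p.2.1.card + p.2.2.card) % 4 = 3)}) := by
  classical
  set E := G.edgeFinset with hE
  set Pe := E.powerset.filter (fun a => IsEul a) with hPe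
  set T := E.powerset ×ˢ (E.powerset ×ˢ E.powerset) with hT
  have key : ∀ (P : (Finset (Sym2 V) × Finset (Sym2 V) × Finset (Sym2 V)) → Prop)
      [DecidablePred P],
      Nat.card {p : Finset (Sym2 V) × Finset (Sym2 V) × Finset (Sym2 V) //
        p.1 ⊆ E ∧ p.2.1 ⊆ E ∧ p.2.2 ⊆ E ∧ P p} = (T.filter P).card := by
    intro P _
    rw [Nat.card_eq_fintype_card, Fintype.card_subtype]
    congr 1
    ext p
    simp only [hT, Finset.mem_filter, Finset.mem_product, Finset.mem_powerset, Finset.mem_univ,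
      true_and]
    tauto
  have hassoc : ∀ (c : (Finset (Sym2 V) × Finset (Sym2 V) × Finset (Sym2 V)) → Prop),
      T.filter (fun p => IsEul (symmDiff p.1 p.2.1) ∧ IsEul (symmDiff p.2.1 p.2.2) ∧ c p) =
      (T.filter (fun p => IsEul (symmDiff p.1 p.2.1) ∧ IsEul (symmDiff p.2.1 p.2.2))).filter
        c := by
    intro c
    rw [Finset.filter_filter]
    apply Finset.filter_congr
    intro p _
    tauto
  constructor
  · -- main identity
    set K : ℤ := ∑ a ∈ Pe, ∑ b ∈ Pe, (-1 : ℤ) ^ ((a ∪ b).card) with hK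
    set F : ℤ := fgi ((1 - gi) ^ E.card) with hF
    have hRHS : (∑ a ∈ Pe, ∑ b ∈ Pe, (-1 : ℤ) ^ (E.card - (a ∪ b).card))
        = (-1 : ℤ) ^ E.card * K := by
      rw [hK, Finset.mul_sum]
      apply Finset.sum_congr rfl
      intro a ha
      rw [Finset.mul_sum]
      apply Finset.sum_congr rfl
      intro b hb
      have ha' : a ⊆ E := Finset.mem_powerset.mp (Finset.mem_filter.mp ha).1
      have hb' : b ⊆ E := Finset.mem_powerset.mp (Finset.mem_filter.mp hb).1
      exact neg_one_pow_sub (Finset.card_le_card (Finset.union_subset ha' hb'))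
    have hcast : (∑ a ∈ Pe, ∑ b ∈ Pe, (-1 : GI) ^ ((a ∪ b).card)) = ((K : ℤ) : GI) := by
      rw [hK]
      push_cast
      rfl
    have hN : ((Nat.card {p : Finset (Sym2 V) × Finset (Sym2 V) × Finset (Sym2 V) //
          p.1 ⊆ E ∧ p.2.1 ⊆ E ∧ p.2.2 ⊆ E ∧
            IsEul (symmDiff p.1 p.2.1) ∧ IsEul (symmDiff p.2.1 p.2.2) ∧
            ((p.1.card + p.2.1.card + p.2.2.card) % 4 = 0 ∨
              (p.1.card + p.2.1.card + p.2.2.card) % 4 = 1)} : ℤ) -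
        (Nat.card {p : Finset (Sym2 V) × Finset (Sym2 V) × Finset (Sym2 V) //
          p.1 ⊆ E ∧ p.2.1 ⊆ E ∧ p.2.2 ⊆ E ∧
            IsEul (symmDiff p.1 p.2.1) ∧ IsEul (symmDiff p.2.1 p.2.2) ∧
            ((p.1.card + p.2.1.card + p.2.2.card) % 4 = 2 ∨
              (p.1.card + p.2.1.card + p.2.2.card) % 4 = 3)} : ℤ)) = F * K := by
      rw [key (fun p => IsEul (symmDiff p.1 p.2.1) ∧ IsEul (symmDiff p.2.1 p.2.2) ∧
            ((p.1.card + p.2.1.card + p.2.2.card) % 4 = 0 ∨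
              (p.1.card + p.2.1.card + p.2.2.card) % 4 = 1)),
          key (fun p => IsEul (symmDiff p.1 p.2.1) ∧ IsEul (symmDiff p.2.1 p.2.2) ∧
            ((p.1.card + p.2.1.card + p.2.2.card) % 4 = 2 ∨
              (p.1.card + p.2.1.card + p.2.2.card) % 4 = 3))]
      have hf1 : T.filter (fun p => IsEul (symmDiff p.1 p.2.1) ∧ IsEul (symmDiff p.2.1 p.2.2) ∧
            ((p.1.card + p.2.1.card + p.2.2.card) % 4 = 0 ∨
              (p.1.card + p.2.1.card + p.2.2.card) % 4 = 1)) =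
          (T.filter (fun p => IsEul (symmDiff p.1 p.2.1) ∧ IsEul (symmDiff p.2.1 p.2.2))).filter
            (fun p => (p.1.card + p.2.1.card + p.2.2.card) % 4 = 0 ∨
              (p.1.card + p.2.1.card + p.2.2.card) % 4 = 1) := by
        ext p
        simp only [Finset.mem_filter]
        tauto
      have hf2 : T.filter (fun p => IsEul (symmDiff p.1 p.2.1) ∧ IsEul (symmDiff p.2.1 p.2.2) ∧
            ((p.1.card + p.2.1.card + p.2.2.card) % 4 = 2 ∨
              (p.1.card + p.2.1.card + p.2.2.card) % 4 = 3)) =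
          (T.filter (fun p => IsEul (symmDiff p.1 p.2.1) ∧ IsEul (symmDiff p.2.1 p.2.2))).filter
            (fun p => (p.1.card + p.2.1.card + p.2.2.card) % 4 = 2 ∨
              (p.1.card + p.2.1.card + p.2.2.card) % 4 = 3) := by
        ext p
        simp only [Finset.mem_filter]
        tauto
      have hcount := count_sub_eq_sum
        (T.filter (fun p => IsEul (symmDiff p.1 p.2.1) ∧ IsEul (symmDiff p.2.1 p.2.2)))
        (fun p : Finset (Sym2 V) × Finset (Sym2 V) × Finset (Sym2 V) =>
          p.1.card + p.2.1.card + p.2.2.card)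
      beta_reduce at hcount
      rw [hf1, hf2, hcount, ← map_sum]
      have htriple := triple_sum_eq E (fun a : Finset (Sym2 V) => IsEul a)
      beta_reduce at htriple
      rw [hT, htriple, ← hPe, hcast, mul_comm, fgi_int_mul, hF]
    have hM : ((Nat.card {p : Finset (Sym2 V) × Finset (Sym2 V) × Finset (Sym2 V) //
          p.1 ⊆ E ∧ p.2.1 ⊆ E ∧ p.2.2 ⊆ E ∧
            ((p.1.card + p.2.1.card + p.2.2.card) % 4 = 0 ∨
              (p.1.card + p.2.1.card + p.2.2.card) % 4 = 1)} : ℤ) -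
        (Nat.card {p : Finset (Sym2 V) × Finset (Sym2 V) × Finset (Sym2 V) //
          p.1 ⊆ E ∧ p.2.1 ⊆ E ∧ p.2.2 ⊆ E ∧
            ((p.1.card + p.2.1.card + p.2.2.card) % 4 = 2 ∨
              (p.1.card + p.2.1.card + p.2.2.card) % 4 = 3)} : ℤ)) = F * (-2 : ℤ) ^ E.card := by
      rw [key (fun p => ((p.1.card + p.2.1.card + p.2.2.card) % 4 = 0 ∨
              (p.1.card + p.2.1.card + p.2.2.card) % 4 = 1)),
          key (fun p => ((p.1.card + p.2.1.card + p.2.2.card) % 4 = 2 ∨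
              (p.1.card + p.2.1.card + p.2.2.card) % 4 = 3))]
      have hcount := count_sub_eq_sum T
        (fun p : Finset (Sym2 V) × Finset (Sym2 V) × Finset (Sym2 V) =>
          p.1.card + p.2.1.card + p.2.2.card)
      beta_reduce at hcount
      rw [hcount, ← map_sum]
      rw [hT, M_sum_eq E, one_add_gi_cube_pow]
      have h2 : ((-2 : ℤ) : GI) ^ E.card = (((-2 : ℤ) ^ E.card : ℤ) : GI) := by push_cast; rfl
      rw [h2, mul_comm, fgi_int_mul, hF]
    rw [hN, hM, hRHS]
    have h2 : (-2 : ℤ) ^ E.card * (-1 : ℤ) ^ E.card = 2 ^ E.card := by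
      rw [← mul_pow]
      norm_num
    linear_combination -F * K * h2
  · -- complement involution
    intro hm1
    have hcomp : ∀ {A B : Finset (Sym2 V)}, A ⊆ E → B ⊆ E →
        (IsEul (symmDiff (E \ A) (E \ B)) ↔ IsEul (symmDiff A B)) := by
      intro A B hA hB
      rw [sdiff_symmDiff_aux hA hB]
    have hcard : ∀ {A : Finset (Sym2 V)}, A ⊆ E → (E \ A).card = E.card - A.card := by
      intro A hA
      exact Finset.card_sdiff_of_subset hA
    constructor
    · apply comp_card_eq E
      · intro p h1 h2 h3 ⟨q1, q2, q3⟩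
        refine ⟨(hcomp h1 h2).mpr q1, (hcomp h2 h3).mpr q2, ?_⟩
        have c1 := hcard h1
        have c2 := hcard h2
        have c3 := hcard h3
        have l1 := Finset.card_le_card h1
        have l2 := Finset.card_le_card h2
        have l3 := Finset.card_le_card h3
        simp only [c1, c2, c3]
        omega
      · intro p h1 h2 h3 ⟨q1, q2, q3⟩
        refine ⟨(hcomp h1 h2).mpr q1, (hcomp h2 h3).mpr q2, ?_⟩
        have c1 := hcard h1
        have c2 := hcard h2
        have c3 := hcard h3
        have l1 := Finset.card_le_card h1
        have l2 := Finset.card_le_card h2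
        have l3 := Finset.card_le_card h3
        simp only [c1, c2, c3]
        omega
    · apply comp_card_eq E
      · intro p h1 h2 h3 q
        have c1 := hcard h1
        have c2 := hcard h2
        have c3 := hcard h3
        have l1 := Finset.card_le_card h1
        have l2 := Finset.card_le_card h2
        have l3 := Finset.card_le_card h3
        simp only [c1, c2, c3]
        omega
      · intro p h1 h2 h3 q
        have c1 := hcard h1
        have c2 := hcard h2
        have c3 := hcard h3
        have l1 := Finset.card_le_card h1
        have l2 := Finset.card_le_card h2
        have l3 := Finset.card_le_card h3
        simp only [c1, c2, c3]
        omega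
end
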